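/- arXiv:2603.14043 — 2 statements merged into one kernel-verified Lean document; each statement's English description precedes it below -/
import Mathlib

section
/- Let G be a star graph on vertices x_1,...,x_n (n ≥ 2) with center x_k and edges {x_i, x_k} for all i ≠ k, and let t ≥ 2. Then the monomial F = (∏_{i ≠ k} x_i)^{t−1} satisfies: F ∉ depol(P_t(Σ_t G)), but x_j · F ∈ depol(P_t(Σ_t G)) for every j ∈ [n]. That is, F represents a nonzero socle element of degree (t−1)(n−1) in R/depol(P_t(Σ_t G)). -/
open MvPolynomial

/-- `p : Fin t → V` is a path on `t` vertices in the graph `H`. -/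
def IsPathOn {V : Type*} (H : SimpleGraph V) {t : ℕ} (p : Fin t → V) : Prop :=
  Function.Injective p ∧
    ∀ (i : ℕ) (h : i + 1 < t), H.Adj (p ⟨i, by omega⟩) (p ⟨i + 1, h⟩)

/-- The `t`-path ideal of a graph. -/
noncomputable def pathIdeal {V : Type*} (k : Type*) [CommRing k] (H : SimpleGraph V) (t : ℕ) :
    Ideal (MvPolynomial V k) :=
  Ideal.span { m | ∃ p : Fin t → V, IsPathOn H p ∧ m = ∏ i, X (p i) }

/-- The suspension `Σ_t G`: attach a path of length `t-1` to each vertex. -/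
def suspension {V : Type*} (G : SimpleGraph V) (t : ℕ) : SimpleGraph (V ⊕ V × Fin (t - 1)) where
  Adj a b := match a, b with
    | .inl u, .inl v => G.Adj u v
    | .inl u, .inr (v, j) => u = v ∧ (j : ℕ) = 0
    | .inr (v, j), .inl u => u = v ∧ (j : ℕ) = 0
    | .inr (u, i), .inr (v, j) => u = v ∧ ((i : ℕ) + 1 = j ∨ (j : ℕ) + 1 = i)
  symm := by
    constructor
    rintro (u | ⟨u, i⟩) (v | ⟨v, j⟩) h
    · exact G.adj_symm h
    · exact h
    · exact h
    · exact ⟨h.1.symm, h.2.symm⟩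
  loopless := by
    constructor
    rintro (u | ⟨u, i⟩) h
    · exact G.irrefl h
    · rcases h with ⟨-, h⟩; omega

/-- The depolarization of the `t`-path ideal of `Σ_t G`, obtained by the substitution
`x_{ij} ↦ x_i`. -/
noncomputable def depolPathIdeal {V : Type*} (k : Type*) [CommRing k] (G : SimpleGraph V)
    (t : ℕ) : Ideal (MvPolynomial V k) :=
  (pathIdeal k (suspension G t) t).map (rename (Sum.elim id Prod.fst))

/-!
Every edge of `Σ_t G` either runs along a whisker or is an edge of `G`, so when every edge of `G`
contains `c`, the depolarization of a `t`-path either contains `x_c` or equals `x_v ^ t` for a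
single vertex `v`. Neither divides `F`, whose exponent is `0` at `c` and `t - 1` elsewhere.
Conversely, `x_j F` is divisible by `x_j ^ t` (the whisker at `j`) for `j ≠ c`, and by
`x_c x_a ^ (t - 1)` (the path `c, a, (a, 0), …, (a, t - 3)`) for `j = c`.
-/

local notation "π" => Sum.elim id Prod.fst

namespace MvPolynomial

lemma prod_X_eq_monomial {σ R ι : Type*} [CommSemiring R] (s : Finset ι) (f : ι → σ) :
    ∏ i ∈ s, (X (f i) : MvPolynomial σ R) = monomial (∑ i ∈ s, Finsupp.single (f i) 1) 1 :=
  (monomial_sum_one s _).symm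

end MvPolynomial

section Paths

variable {W : Type*} {H : SimpleGraph W}

lemma IsPathOn.cons {m : ℕ} {p : Fin m → W} (hp : IsPathOn H p) {w : W}
    (hw : w ∉ Set.range p) (hadj : ∀ h : 0 < m, H.Adj w (p ⟨0, h⟩)) :
    IsPathOn H (Fin.cons w p : Fin (m + 1) → W) := by
  refine ⟨Fin.cons_injective_iff.2 ⟨hw, hp.1⟩, ?_⟩
  rintro (_ | i) h
  · exact hadj (by omega)
  · exact hp.2 i (by omega)

end Paths

namespace suspension

variable {V : Type*} {G : SimpleGraph V} {t : ℕ}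

lemma depol_eq_or_adj {x y : V ⊕ V × Fin (t - 1)} (h : (suspension G t).Adj x y) :
    π x = π y ∨ G.Adj (π x) (π y) := by
  rcases x with u | ⟨u, i⟩ <;> rcases y with v | ⟨v, j⟩
  · exact Or.inr h
  · exact Or.inl h.1
  · exact Or.inl h.1.symm
  · exact Or.inl h.1

def whiskerPath (v : V) (t : ℕ) {m : ℕ} (hm : m ≤ t) : Fin m → V ⊕ V × Fin (t - 1)
  | ⟨0, _⟩ => .inl v
  | ⟨i + 1, h⟩ => .inr (v, ⟨i, by omega⟩)

lemma depol_whiskerPath (v : V) {m : ℕ} (hm : m ≤ t) (i : Fin m) :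
    π (whiskerPath v t hm i) = v := by
  rcases i with ⟨_ | i, h⟩ <;> rfl

lemma isPathOn_whiskerPath (v : V) {m : ℕ} (hm : m ≤ t) :
    IsPathOn (suspension G t) (whiskerPath v t hm) := by
  refine ⟨?_, ?_⟩
  · rintro ⟨_ | i, hi⟩ ⟨_ | j, hj⟩ h <;> simp_all [whiskerPath]
  · rintro (_ | i) h
    · exact ⟨rfl, rfl⟩
    · exact ⟨rfl, Or.inl rfl⟩

variable {c : V}

lemma depol_eq_of_isPathOn_of_forall_ne (hG : ∀ a b, G.Adj a b → a = c ∨ b = c) {m : ℕ}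
    {p : Fin m → V ⊕ V × Fin (t - 1)} (hp : IsPathOn (suspension G t) p)
    (hc : ∀ i, π (p i) ≠ c) (i j : Fin m) : π (p i) = π (p j) := by
  have h0 : 0 < m := i.pos
  have key (i : ℕ) (hi : i < m) : π (p ⟨i, hi⟩) = π (p ⟨0, h0⟩) := by
    induction i with
    | zero => rfl
    | succ i ih =>
      rcases depol_eq_or_adj (hp.2 i hi) with heq | hadj
      · rw [← heq, ih]
      · rcases hG _ _ hadj with h | h <;> exact absurd h (hc _)
  rw [key i i.2, key j j.2]

lemma not_sum_single_depol_le_of_isPathOn (hG : ∀ a b, G.Adj a b → a = c ∨ b = c) {m : ℕ}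
    {p : Fin m → V ⊕ V × Fin (t - 1)} (hp : IsPathOn (suspension G t) p) {d : V →₀ ℕ}
    (hdc : d c = 0) (hd : ∀ v, d v < m) : ¬ ∑ i, Finsupp.single (π (p i)) 1 ≤ d := by
  intro hle
  by_cases hc : ∃ i, π (p i) = c
  · obtain ⟨i, hi⟩ := hc
    have := (Finset.single_le_sum (f := fun i => Finsupp.single (π (p i)) 1)
      (fun _ _ => zero_le) (Finset.mem_univ i)).trans hle c
    simp [hi, hdc] at this
  · simp only [not_exists] at hc
    have h0 : 0 < m := (Nat.zero_le _).trans_lt (hd c)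
    have hconst : ∑ i, Finsupp.single (π (p i)) 1 = m • Finsupp.single (π (p ⟨0, h0⟩)) 1 := by
      simp [depol_eq_of_isPathOn_of_forall_ne hG hp hc _ ⟨0, h0⟩]
    have := hle (π (p ⟨0, h0⟩))
    simp only [hconst, Finsupp.smul_single, smul_eq_mul, mul_one, Finsupp.single_eq_same] at this
    exact (hd _).not_ge this

end suspension

section DepolPathIdeal

variable {V : Type*} {k : Type*} [CommRing k] {G : SimpleGraph V} {t : ℕ}

lemma prod_X_depol_mem_depolPathIdeal {p : Fin t → V ⊕ V × Fin (t - 1)}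
    (hp : IsPathOn (suspension G t) p) :
    ∏ i, (X (π (p i)) : MvPolynomial V k) ∈ depolPathIdeal k G t := by
  have hmem : ∏ i, X (p i) ∈ pathIdeal k (suspension G t) t := Ideal.subset_span ⟨p, hp, rfl⟩
  have := Ideal.mem_map_of_mem (rename π) hmem
  simp only [map_prod, rename_X] at this
  exact this

lemma X_pow_mem_depolPathIdeal (v : V) : (X v : MvPolynomial V k) ^ t ∈ depolPathIdeal k G t := by
  simpa [suspension.depol_whiskerPath] using
    prod_X_depol_mem_depolPathIdeal (k := k) (suspension.isPathOn_whiskerPath (G := G) v le_rfl)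

lemma X_mul_X_pow_mem_depolPathIdeal {u v : V} (huv : G.Adj u v) (ht : t ≠ 0) :
    (X u : MvPolynomial V k) * X v ^ (t - 1) ∈ depolPathIdeal k G t := by
  obtain ⟨s, rfl⟩ := Nat.exists_eq_succ_of_ne_zero ht
  have hp : IsPathOn (suspension G (s + 1))
      (Fin.cons (.inl u) (suspension.whiskerPath v (s + 1) s.le_succ)) := by
    refine (suspension.isPathOn_whiskerPath v _).cons ?_ fun _ => huv
    rintro ⟨i, hi⟩
    have := congrArg π hi
    simp only [suspension.depol_whiskerPath] at this
    exact huv.ne this.symm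
  have := prod_X_depol_mem_depolPathIdeal (k := k) hp
  simp only [Fin.prod_univ_succ, Fin.cons_zero, Fin.cons_succ] at this
  rw [Finset.prod_congr rfl fun i _ => by rw [suspension.depol_whiskerPath]] at this
  simpa using this

lemma monomial_mem_depolPathIdeal_iff [Nontrivial k] {d : V →₀ ℕ} :
    monomial d (1 : k) ∈ depolPathIdeal k G t ↔ ∃ p : Fin t → V ⊕ V × Fin (t - 1),
      IsPathOn (suspension G t) p ∧ ∑ i, Finsupp.single (π (p i)) 1 ≤ d := by
  have hspan : depolPathIdeal k G t = Ideal.span ((fun e => monomial e 1) ''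
      {e | ∃ p : Fin t → V ⊕ V × Fin (t - 1), IsPathOn (suspension G t) p ∧
        e = ∑ i, Finsupp.single (π (p i)) 1}) := by
    rw [depolPathIdeal, pathIdeal, Ideal.map_span]
    congr 1
    ext f
    constructor
    all_goals rintro ⟨_, ⟨p, hp, rfl⟩, rfl⟩
    all_goals exact ⟨_, ⟨p, hp, rfl⟩, by simp only [map_prod, rename_X]; rw [prod_X_eq_monomial]⟩
  classical
  rw [hspan, mem_ideal_span_monomial_image, support_monomial, if_neg one_ne_zero]
  simp

end DepolPathIdeal

/-- For a star graph `G` on `n ≥ 2` vertices with center `c` and `t ≥ 2`, the monomial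
`F = (∏_{i ≠ c} x_i)^{t−1}` is not in the depolarized `t`-path ideal of `Σ_t G`, while
`x_j · F` is, for every `j`; i.e. `F` is a nonzero socle element of degree
`(t−1)(n−1)`. -/
theorem stmt8 {k : Type*} [Field k] {n : ℕ} (hn : 2 ≤ n) (t : ℕ) (ht : 2 ≤ t)
    (G : SimpleGraph (Fin n)) (c : Fin n)
    (hG : ∀ a b : Fin n, G.Adj a b ↔ (a ≠ b ∧ (a = c ∨ b = c))) :
    ((∏ i ∈ Finset.univ.erase c, (X i : MvPolynomial (Fin n) k)) ^ (t - 1) ∉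
        depolPathIdeal k G t) ∧
    ∀ j : Fin n, (X j : MvPolynomial (Fin n) k) *
        (∏ i ∈ Finset.univ.erase c, X i) ^ (t - 1) ∈ depolPathIdeal k G t := by
  classical
  refine ⟨?_, fun j => ?_⟩
  · rw [← Finset.prod_pow, prod_X_pow, monomial_mem_depolPathIdeal_iff]
    rintro ⟨p, hp, hle⟩
    refine suspension.not_sum_single_depol_le_of_isPathOn (fun a b h => ((hG a b).1 h).2) hp
      (by simp) (fun v => ?_) hle
    simp only [Finsupp.indicator_apply]
    split_ifs <;> omega
  · by_cases hj : j = c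
    · rw [hj]
      have : Nontrivial (Fin n) := Fin.nontrivial_iff_two_le.2 hn
      obtain ⟨a, ha⟩ := exists_ne c
      refine Ideal.mem_of_dvd _ (mul_dvd_mul_left _ (pow_dvd_pow_of_dvd
        (Finset.dvd_prod_of_mem _ (Finset.mem_erase.2 ⟨ha, Finset.mem_univ a⟩)) _)) ?_
      exact X_mul_X_pow_mem_depolPathIdeal ((hG c a).2 ⟨ha.symm, Or.inl rfl⟩) (by omega)
    · refine Ideal.mem_of_dvd _ ?_ (X_pow_mem_depolPathIdeal j)
      rw [← Nat.sub_add_cancel (by omega : 1 ≤ t), pow_succ', Nat.add_sub_cancel]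
      exact mul_dvd_mul_left _ (pow_dvd_pow_of_dvd
        (Finset.dvd_prod_of_mem _ (Finset.mem_erase.2 ⟨hj, Finset.mem_univ j⟩)) _)
end

section
/- Let t ≥ 2, n ≥ 2, and in T = k[x_{ij} : i ∈ [n], 0 ≤ j ≤ t−1] set J_2 = (x_{10}x_{11}, x_{20}x_{21}) + (∏_{j=0}^{t−1} x_{ij} : 3 ≤ i ≤ n) and I_2 = (x_{10}x_{11}, x_{20}x_{21}, x_{10}x_{20}) + (∏_{j=0}^{t−1} x_{ij} : 3 ≤ i ≤ n). Then J_2 : I_2 = (x_{11}, x_{21}) + (∏_{j=0}^{t−1} x_{ij} : 3 ≤ i ≤ n), which is generated by a regular sequence. -/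
/-!
Both ideals are monomial ideals, and `I₂ = J₂ + (x₁₀ x₂₀)`, so `J₂ : I₂ = J₂ : x₁₀ x₂₀`. The colon
of a monomial ideal by a monomial `x^a` is generated by the `x^(s - a)` (truncated subtraction)
for its generators `x^s`: this turns `x_{i0} x_{i1}` into `x_{i1}` for the first two rows and
leaves the full row products of the other rows alone. Each of the resulting generators lives in
its own row of variables, and monomials in pairwise disjoint sets of variables form a regular
sequence, because dividing a monomial ideal by a monomial coprime to all its generators does not
change it.
-/

open MvPolynomial

/-- The product `x_{i,a} x_{i,a+1} ⋯ x_{i,b-1}` of consecutive variables in the `i`-th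
block. -/
noncomputable def blockProd {n t : ℕ} (k : Type*) [CommRing k] (i : Fin n) (a b : ℕ) :
    MvPolynomial (Fin n × Fin t) k :=
  ∏ j ∈ Finset.univ.filter (fun j : Fin t => a ≤ (j : ℕ) ∧ (j : ℕ) < b), X (i, j)

theorem Finsupp.tsub_eq_self_of_disjoint {σ : Type*} {s a : σ →₀ ℕ} (h : Disjoint s a) :
    s - a = s := by
  ext x
  have hx := congrArg (· x) (_root_.disjoint_iff.mp h)
  simp only [Finsupp.inf_apply, bot_eq_zero, Finsupp.coe_zero, Pi.zero_apply] at hx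
  rw [Finsupp.tsub_apply]
  omega

theorem Finsupp.disjoint_of_forall_mem_support_fst {ι κ : Type*} {a b : ι × κ →₀ ℕ} {i : ι}
    (ha : ∀ p ∈ a.support, p.1 = i) (hb : ∀ p ∈ b.support, p.1 ≠ i) : Disjoint a b :=
  Finsupp.disjoint_iff.mpr (Finset.disjoint_left.mpr fun p hpa hpb => hb p hpb (ha p hpa))

theorem Ideal.colon_span_insert_of_subset {R : Type*} [CommSemiring R] {J : Ideal R} {u : R}
    {G : Set R} (hG : G ⊆ J) : J.colon (Ideal.span (insert u G) : Set R) = J.colon {u} := by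
  rw [Ideal.colon_span, Set.insert_eq, Submodule.colon_union,
    (Submodule.colon_eq_top_iff_subset G).mpr hG, inf_top_eq]

namespace MvPolynomial

variable {σ R : Type*}

section CommSemiring

variable [CommSemiring R]

theorem span_monomial_image_colon_monomial (S : Set (σ →₀ ℕ)) (a : σ →₀ ℕ) :
    (Ideal.span ((fun s => monomial s (1 : R)) '' S)).colon {monomial a 1} =
      Ideal.span ((fun s => monomial s (1 : R)) '' ((· - a) '' S)) := by
  refine le_antisymm (fun f hf => ?_) (Ideal.span_le.mpr ?_)
  · rw [Submodule.mem_colon_singleton, smul_eq_mul, mem_ideal_span_monomial_image] at hf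
    rw [mem_ideal_span_monomial_image]
    intro m hm
    have hma : m + a ∈ (f * monomial a 1).support := by
      rwa [mem_support_iff, coeff_mul_monomial, mul_one, ← mem_support_iff]
    obtain ⟨s, hs, hle⟩ := hf _ hma
    exact ⟨s - a, ⟨s, hs, rfl⟩, tsub_le_iff_right.mpr hle⟩
  · rintro _ ⟨_, ⟨s, hs, rfl⟩, rfl⟩
    rw [SetLike.mem_coe, Submodule.mem_colon_singleton, smul_eq_mul, monomial_mul, one_mul]
    exact Ideal.mem_of_dvd _ (monomial_dvd_monomial.mpr ⟨Or.inr le_tsub_add, one_dvd _⟩)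
      (Ideal.subset_span ⟨s, hs, rfl⟩)

theorem span_monomial_image_colon_monomial_of_disjoint {S : Set (σ →₀ ℕ)} {a : σ →₀ ℕ}
    (h : ∀ s ∈ S, Disjoint s a) :
    (Ideal.span ((fun s => monomial s (1 : R)) '' S)).colon {monomial a 1} =
      Ideal.span ((fun s => monomial s (1 : R)) '' S) := by
  rw [span_monomial_image_colon_monomial,
    Set.image_congr fun s hs => Finsupp.tsub_eq_self_of_disjoint (h s hs), Set.image_id']

theorem one_notMem_span_monomial_image [Nontrivial R] {S : Set (σ →₀ ℕ)} (h : 0 ∉ S) :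
    (1 : MvPolynomial σ R) ∉ Ideal.span ((fun s => monomial s (1 : R)) '' S) := by
  rw [mem_ideal_span_monomial_image]
  intro h1
  obtain ⟨s, hs, hle⟩ := h1 0 (by simp)
  exact h (nonpos_iff_eq_zero.mp hle ▸ hs)

theorem ofList_map_monomial (as : List (σ →₀ ℕ)) :
    Ideal.ofList (as.map fun a => monomial a (1 : R)) =
      Ideal.span ((fun s => monomial s (1 : R)) '' {a | a ∈ as}) := by
  simp only [Ideal.ofList, List.mem_map]
  rfl

end CommSemiring

theorem isRegular_map_monomial [CommRing R] [Nontrivial R] {as : List (σ →₀ ℕ)}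
    (hdisj : as.Pairwise Disjoint) (hne : 0 ∉ as) :
    RingTheory.Sequence.IsRegular (MvPolynomial σ R) (as.map fun a => monomial a (1 : R)) := by
  refine ⟨⟨fun i hi => ?_⟩, ?_⟩
  · rw [List.length_map] at hi
    rw [List.getElem_map, ← List.map_take, Ideal.smul_eq_mul, Ideal.mul_top, ofList_map_monomial,
      isSMulRegular_quotient_iff_mem_of_smul_mem]
    intro f hf
    rwa [← span_monomial_image_colon_monomial_of_disjoint (a := as[i]),
      Submodule.mem_colon_singleton, smul_eq_mul, mul_comm]
    exact fun s hs => hdisj.rel_of_mem_take_of_mem_drop hs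
      (List.mem_iff_getElem.mpr ⟨0, by simpa using hi, by simp⟩)
  · rw [Ideal.smul_eq_mul, Ideal.mul_top, ofList_map_monomial, ne_comm, Ne,
      Ideal.eq_top_iff_one]
    exact one_notMem_span_monomial_image hne

end MvPolynomial

section Rows

variable {ι κ : Type*} [Fintype κ]

noncomputable def rowExp (i : ι) : ι × κ →₀ ℕ := ∑ j, Finsupp.single (i, j) 1

theorem fst_eq_of_mem_support_rowExp {i : ι} {p : ι × κ} (hp : p ∈ (rowExp i).support) :
    p.1 = i := by
  classical
  obtain ⟨j, -, hj⟩ := Finset.mem_biUnion.mp (Finsupp.support_finsetSum hp)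
  rw [Finset.mem_singleton.mp (Finsupp.support_single_subset hj)]

theorem rowExp_ne_zero (i : ι) (j : κ) : (rowExp i : ι × κ →₀ ℕ) ≠ 0 := by
  unfold rowExp
  refine (lt_of_lt_of_le ?_ (Finset.single_le_sum (fun _ _ => zero_le) (Finset.mem_univ j))).ne'
  exact pos_iff_ne_zero.mpr (Finsupp.single_ne_zero.mpr one_ne_zero)

end Rows

theorem blockProd_zero_eq_monomial {n t : ℕ} (k : Type*) [CommRing k] (i : Fin n) :
    blockProd (t := t) k i 0 t = monomial (rowExp i) (1 : k) := by
  rw [blockProd, rowExp, monomial_sum_one,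
    Finset.filter_true_of_mem fun j _ => ⟨Nat.zero_le _, j.is_lt⟩]
  rfl

section Generators

variable {n t : ℕ}

noncomputable def genExpJ (j₀ j₁ : Fin t) (i : Fin n) : Fin n × Fin t →₀ ℕ :=
  if (i : ℕ) < 2 then Finsupp.single (i, j₀) 1 + Finsupp.single (i, j₁) 1 else rowExp i

noncomputable def genExpColon (j₁ : Fin t) (i : Fin n) : Fin n × Fin t →₀ ℕ :=
  if (i : ℕ) < 2 then Finsupp.single (i, j₁) 1 else rowExp i

theorem pair_union_setOf_eq_range_ite {α : Type*} {x₁ x₂ : Fin n} (hx₁ : (x₁ : ℕ) = 0)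
    (hx₂ : (x₂ : ℕ) = 1) (F G : Fin n → α) :
    {F x₁, F x₂} ∪ {m | ∃ i : Fin n, 2 ≤ (i : ℕ) ∧ m = G i} =
      Set.range fun i : Fin n => if (i : ℕ) < 2 then F i else G i := by
  ext m
  simp only [Set.mem_union, Set.mem_insert_iff, Set.mem_singleton_iff, Set.mem_ofPred_eq,
    Set.mem_range]
  constructor
  · rintro ((rfl | rfl) | ⟨i, hi, rfl⟩)
    · exact ⟨x₁, by simp [hx₁]⟩
    · exact ⟨x₂, by simp [hx₂]⟩
    · exact ⟨i, by simp [Nat.not_lt.mpr hi]⟩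
  · rintro ⟨i, rfl⟩
    split_ifs with hi
    · obtain rfl | rfl : i = x₁ ∨ i = x₂ := by omega
      · simp
      · simp
    · exact Or.inr ⟨i, by omega, rfl⟩

theorem image_monomial_range_genExpJ (k : Type*) [CommRing k] (j₀ j₁ : Fin t) {x₁ x₂ : Fin n}
    (hx₁ : (x₁ : ℕ) = 0) (hx₂ : (x₂ : ℕ) = 1) :
    (fun s => monomial s (1 : k)) '' Set.range (genExpJ j₀ j₁) =
      {X (x₁, j₀) * X (x₁, j₁), X (x₂, j₀) * X (x₂, j₁)} ∪
        {m | ∃ i : Fin n, 2 ≤ (i : ℕ) ∧ m = blockProd k i 0 t} := by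
  rw [pair_union_setOf_eq_range_ite hx₁ hx₂ (fun i => X (i, j₀) * X (i, j₁))
    (fun i => blockProd k i 0 t), ← Set.range_comp]
  congr 1
  funext i
  simp only [Function.comp_apply, genExpJ, apply_ite (monomial · (1 : k)), monomial_single_add,
    pow_one, blockProd_zero_eq_monomial]
  rfl

theorem image_monomial_range_genExpColon (k : Type*) [CommRing k] (j₁ : Fin t) {x₁ x₂ : Fin n}
    (hx₁ : (x₁ : ℕ) = 0) (hx₂ : (x₂ : ℕ) = 1) :
    (fun s => monomial s (1 : k)) '' Set.range (genExpColon j₁) =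
      {X (x₁, j₁), X (x₂, j₁)} ∪ {m | ∃ i : Fin n, 2 ≤ (i : ℕ) ∧ m = blockProd k i 0 t} := by
  rw [pair_union_setOf_eq_range_ite hx₁ hx₂ (fun i => X (i, j₁))
    (fun i => blockProd k i 0 t), ← Set.range_comp]
  congr 1
  funext i
  simp only [Function.comp_apply, genExpColon, apply_ite (monomial · (1 : k)),
    blockProd_zero_eq_monomial]
  rfl

theorem genExpJ_tsub {j₀ j₁ : Fin t} {x₁ x₂ : Fin n} (hx₁ : (x₁ : ℕ) = 0)
    (hx₂ : (x₂ : ℕ) = 1) (i : Fin n) :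
    genExpJ j₀ j₁ i - (Finsupp.single (x₁, j₀) 1 + Finsupp.single (x₂, j₀) 1) =
      genExpColon j₁ i := by
  have hsingle {p q : Fin n × Fin t} (h : p ≠ q) :
      Finsupp.single p 1 - Finsupp.single q 1 = Finsupp.single p 1 :=
    Finsupp.tsub_eq_self_of_disjoint <| Finsupp.disjoint_iff.mpr <|
      (Finsupp.support_single_disjoint one_ne_zero one_ne_zero).mpr h
  unfold genExpJ genExpColon
  split_ifs with hi
  · obtain rfl | rfl : i = x₁ ∨ i = x₂ := by omega
    · rw [add_tsub_add_eq_tsub_left, hsingle (by simp; omega)]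
    · rw [add_comm (Finsupp.single (x₁, j₀) 1), add_tsub_add_eq_tsub_left,
        hsingle (by simp; omega)]
  · refine Finsupp.tsub_eq_self_of_disjoint <|
      Finsupp.disjoint_of_forall_mem_support_fst (fun _ => fst_eq_of_mem_support_rowExp) ?_
    intro p hp
    rcases Finset.mem_union.mp (Finsupp.support_add hp) with hp | hp <;>
      rw [Finset.mem_singleton.mp (Finsupp.support_single_subset hp)] <;>
      rintro rfl <;> dsimp only at hi <;> omega

theorem fst_eq_of_mem_support_genExpColon {j₁ : Fin t} {i : Fin n} {p : Fin n × Fin t}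
    (hp : p ∈ (genExpColon j₁ i).support) : p.1 = i := by
  unfold genExpColon at hp
  split_ifs at hp
  · rw [Finset.mem_singleton.mp (Finsupp.support_single_subset hp)]
  · exact fst_eq_of_mem_support_rowExp hp

theorem genExpColon_ne_zero (j₁ : Fin t) (i : Fin n) : genExpColon j₁ i ≠ 0 := by
  unfold genExpColon
  split_ifs
  · exact Finsupp.single_ne_zero.mpr one_ne_zero
  · exact rowExp_ne_zero i j₁

theorem pairwise_disjoint_genExpColon (j₁ : Fin t) :
    ((List.finRange n).map (genExpColon j₁)).Pairwise Disjoint :=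
  List.pairwise_map.mpr <| (List.nodup_finRange n).imp fun hne =>
    Finsupp.disjoint_of_forall_mem_support_fst (fun _ => fst_eq_of_mem_support_genExpColon)
      fun _ hp => (fst_eq_of_mem_support_genExpColon hp).trans_ne (Ne.symm hne)

end Generators

theorem stmt17_general {k : Type*} [Field k] {n t : ℕ}
    (j₀ j₁ : Fin t)
    (x₁ x₂ : Fin n) (hx₁ : (x₁ : ℕ) = 0) (hx₂ : (x₂ : ℕ) = 1)
    (J₂ I₂ : Ideal (MvPolynomial (Fin n × Fin t) k))
    (hJ₂ : J₂ = Ideal.span ({X (x₁, j₀) * X (x₁, j₁), X (x₂, j₀) * X (x₂, j₁)} ∪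
      { m | ∃ i : Fin n, 2 ≤ (i : ℕ) ∧ m = blockProd k i 0 t }))
    (hI₂ : I₂ = Ideal.span ({X (x₁, j₀) * X (x₁, j₁), X (x₂, j₀) * X (x₂, j₁),
        X (x₁, j₀) * X (x₂, j₀)} ∪
      { m | ∃ i : Fin n, 2 ≤ (i : ℕ) ∧ m = blockProd k i 0 t })) :
    Submodule.colon J₂ I₂ = Ideal.span ({X (x₁, j₁), X (x₂, j₁)} ∪
      { m | ∃ i : Fin n, 2 ≤ (i : ℕ) ∧ m = blockProd k i 0 t }) ∧
    ∃ rs : List (MvPolynomial (Fin n × Fin t) k),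
      RingTheory.Sequence.IsRegular (MvPolynomial (Fin n × Fin t) k) rs ∧
      Submodule.colon J₂ I₂ = Ideal.span { x | x ∈ rs } := by
  have hI : I₂ = Ideal.span
      (insert (monomial (Finsupp.single (x₁, j₀) 1 + Finsupp.single (x₂, j₀) 1) (1 : k))
      ({X (x₁, j₀) * X (x₁, j₁), X (x₂, j₀) * X (x₂, j₁)} ∪
        {m | ∃ i : Fin n, 2 ≤ (i : ℕ) ∧ m = blockProd k i 0 t})) := by
    rw [hI₂, monomial_single_add, pow_one]
    congr 1
    ext
    simp only [Set.mem_union, Set.mem_insert_iff, Set.mem_singleton_iff]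
    tauto
  have hcolon : J₂.colon I₂ =
      Ideal.span ((fun s => monomial s (1 : k)) '' Set.range (genExpColon j₁)) := by
    rw [hI, Ideal.colon_span_insert_of_subset (hJ₂ ▸ Ideal.subset_span), hJ₂,
      ← image_monomial_range_genExpJ k j₀ j₁ hx₁ hx₂, span_monomial_image_colon_monomial,
      ← Set.range_comp]
    simp_rw [Function.comp_def, genExpJ_tsub hx₁ hx₂]
  refine ⟨by rw [hcolon, image_monomial_range_genExpColon k j₁ hx₁ hx₂], _,
    isRegular_map_monomial (pairwise_disjoint_genExpColon j₁) (by simp [genExpColon_ne_zero]), ?_⟩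
  rw [hcolon, ← Ideal.ofList, ofList_map_monomial]
  congr
  ext
  simp

/-- The colon ideal `J₂ : I₂` equals `(x_{11}, x_{21}) + (∏_j x_{ij} : i ≥ 3)`, which is
generated by a regular sequence. -/
theorem stmt17 {k : Type*} [Field k] {n t : ℕ} (ht : 2 ≤ t) (hn : 2 ≤ n)
    (j₀ j₁ : Fin t) (hj₀ : (j₀ : ℕ) = 0) (hj₁ : (j₁ : ℕ) = 1)
    (x₁ x₂ : Fin n) (hx₁ : (x₁ : ℕ) = 0) (hx₂ : (x₂ : ℕ) = 1)
    (J₂ I₂ : Ideal (MvPolynomial (Fin n × Fin t) k))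
    (hJ₂ : J₂ = Ideal.span ({X (x₁, j₀) * X (x₁, j₁), X (x₂, j₀) * X (x₂, j₁)} ∪
      { m | ∃ i : Fin n, 2 ≤ (i : ℕ) ∧ m = blockProd k i 0 t }))
    (hI₂ : I₂ = Ideal.span ({X (x₁, j₀) * X (x₁, j₁), X (x₂, j₀) * X (x₂, j₁),
        X (x₁, j₀) * X (x₂, j₀)} ∪
      { m | ∃ i : Fin n, 2 ≤ (i : ℕ) ∧ m = blockProd k i 0 t })) :
    Submodule.colon J₂ I₂ = Ideal.span ({X (x₁, j₁), X (x₂, j₁)} ∪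
      { m | ∃ i : Fin n, 2 ≤ (i : ℕ) ∧ m = blockProd k i 0 t }) ∧
    ∃ rs : List (MvPolynomial (Fin n × Fin t) k),
      RingTheory.Sequence.IsRegular (MvPolynomial (Fin n × Fin t) k) rs ∧
      Submodule.colon J₂ I₂ = Ideal.span { x | x ∈ rs } :=
  stmt17_general j₀ j₁ x₁ x₂ hx₁ hx₂ J₂ I₂ hJ₂ hI₂
end
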